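/- arXiv:1907.04000 — 4 statements merged into one kernel-verified Lean document; each statement's English description precedes it below -/
import Mathlib

section
/- If Φ is a flow on a complete metric space X, then a nonempty subset A ⊆ X is a compact minimal set (nonempty, closed, invariant, containing no proper nonempty closed invariant subset) if and only if every point x ∈ A is a Birkhoff recurrent point whose orbit closure equals A. -/
open Set Metric

private lemma flow_image_closure {X : Type*} [TopologicalSpace X]
    (Φ : ℝ → X → X)
    (hcont : Continuous fun p : ℝ × X => Φ p.1 p.2)
    (hzero : ∀ x, Φ 0 x = x)
    (hadd : ∀ t s x, Φ (t + s) x = Φ t (Φ s x))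
    (t : ℝ) (S : Set X) : Φ t '' closure S = closure (Φ t '' S) := by
  have hct : ∀ r : ℝ, Continuous (Φ r) := fun r =>
    hcont.comp (continuous_const.prodMk continuous_id)
  let e : X ≃ₜ X :=
    { toFun := Φ t
      invFun := Φ (-t)
      left_inv := fun x => by rw [← hadd, neg_add_cancel, hzero]
      right_inv := fun x => by rw [← hadd, add_neg_cancel, hzero]
      continuous_toFun := hct t
      continuous_invFun := hct (-t) }
  exact e.image_closure S

private lemma flow_orbit_shift {X : Type*}
    (Φ : ℝ → X → X)
    (hadd : ∀ t s x, Φ (t + s) x = Φ t (Φ s x))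
    (t : ℝ) (x : X) :
    Φ t '' (range fun s => Φ s x) = range fun s => Φ s x := by
  ext z
  constructor
  · rintro ⟨w, ⟨s, rfl⟩, rfl⟩
    exact ⟨t + s, hadd t s x⟩
  · rintro ⟨s, rfl⟩
    exact ⟨Φ (s - t) x, ⟨s - t, rfl⟩, by rw [← hadd]; ring_nf⟩

/-- A nonempty subset A of a complete metric space with a flow Φ is a
compact minimal set iff every point of A is Birkhoff recurrent with orbit closure A. -/
theorem stmt0 {X : Type*} [MetricSpace X] [CompleteSpace X]
    (Φ : ℝ → X → X)
    (hcont : Continuous fun p : ℝ × X => Φ p.1 p.2)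
    (hzero : ∀ x, Φ 0 x = x)
    (hadd : ∀ t s x, Φ (t + s) x = Φ t (Φ s x))
    (A : Set X) (hA : A.Nonempty) :
    (IsCompact A ∧ IsClosed A ∧ (∀ t : ℝ, Φ t '' A = A) ∧
      (∀ B ⊆ A, B.Nonempty → IsClosed B → (∀ t : ℝ, Φ t '' B = B) → B = A)) ↔
    (∀ x ∈ A,
      ((∀ ε > 0, ∃ l > 0, ∀ a : ℝ, ∃ t ∈ Icc a (a + l), dist x (Φ t x) < ε) ∧
        IsCompact (closure (range fun t => Φ t x))) ∧
      closure (range fun t => Φ t x) = A) := by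
  have hct : ∀ r : ℝ, Continuous (Φ r) := fun r =>
    hcont.comp (continuous_const.prodMk continuous_id)
  have hinvcl : ∀ (y : X) (t : ℝ),
      Φ t '' closure (range fun s => Φ s y) = closure (range fun s => Φ s y) := by
    intro y t
    rw [flow_image_closure Φ hcont hzero hadd, flow_orbit_shift Φ hadd]
  constructor
  · rintro ⟨hcomp, hclosed, hinv, hmin⟩ x hx
    -- orbit of any point of A stays in A
    have horbA : ∀ y ∈ A, ∀ t : ℝ, Φ t y ∈ A := by
      intro y hy t
      rw [← hinv t]
      exact mem_image_of_mem _ hy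
    -- orbit closure equals A for any point of A
    have hHA : ∀ y ∈ A, closure (range fun s => Φ s y) = A := by
      intro y hy
      refine hmin _ (closure_minimal (range_subset_iff.2 (horbA y hy)) hclosed)
        ⟨y, subset_closure ⟨0, hzero y⟩⟩ isClosed_closure (hinvcl y)
    refine ⟨⟨?_, ?_⟩, hHA x hx⟩
    · -- recurrence
      intro ε hε
      have hτ : ∀ y ∈ A, ∃ τ : ℝ, dist x (Φ τ y) < ε := by
        intro y hy
        have : x ∈ closure (range fun s => Φ s y) := (hHA y hy).symm ▸ hx
        rcases Metric.mem_closure_iff.1 this ε hε with ⟨z, ⟨τ, rfl⟩, hz⟩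
        exact ⟨τ, hz⟩
      classical
      set τ : X → ℝ := fun y => if h : y ∈ A then (hτ y h).choose else 0 with hτdef
      have hτspec : ∀ y ∈ A, dist x (Φ (τ y) y) < ε := by
        intro y hy
        simp only [hτdef, dif_pos hy]
        exact (hτ y hy).choose_spec
      set U : X → Set X := fun y => {z | dist x (Φ (τ y) z) < ε} with hUdef
      have hUopen : ∀ y, IsOpen (U y) := by
        intro y
        have : Continuous fun z => dist x (Φ (τ y) z) :=
          continuous_const.dist (hct (τ y))
        exact isOpen_lt this continuous_const
      obtain ⟨s, hsA, hcover⟩ := hcomp.elim_nhds_subcover U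
        (fun y hy => (hUopen y).mem_nhds (hτspec y hy))
      have hsne : s.Nonempty := by
        rcases mem_iUnion₂.1 (hcover hx) with ⟨y, hy, -⟩
        exact ⟨y, hy⟩
      set m : ℝ := s.sup' hsne (fun y => |τ y|) with hmdef
      have hm0 : 0 ≤ m := by
        rcases hsne with ⟨y, hy⟩
        refine le_trans (abs_nonneg (τ y)) ?_
        rw [hmdef]
        exact Finset.le_sup' (fun y => |τ y|) hy
      refine ⟨2 * m + 1, by linarith, fun a => ?_⟩
      have hz : Φ (a + m) x ∈ A := horbA x hx _
      rcases mem_iUnion₂.1 (hcover hz) with ⟨y, hy, hzy⟩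
      have hτy : |τ y| ≤ m := by rw [hmdef]; exact Finset.le_sup' (fun y => |τ y|) hy
      rw [abs_le] at hτy
      refine ⟨τ y + (a + m), ⟨by linarith [hτy.1], by linarith [hτy.2]⟩, ?_⟩
      rw [hadd]
      exact hzy
    · -- compactness of orbit closure
      rw [hHA x hx]; exact hcomp
  · intro h
    obtain ⟨x0, hx0⟩ := hA
    obtain ⟨⟨-, hcomp⟩, hclA⟩ := h x0 hx0
    have hclosed : IsClosed A := hclA ▸ isClosed_closure
    refine ⟨hclA ▸ hcomp, hclosed, fun t => by rw [← hclA, hinvcl], ?_⟩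
    intro B hBA ⟨y, hyB⟩ hBclosed hBinv
    have hyA : y ∈ A := hBA hyB
    have horbB : range (fun s => Φ s y) ⊆ B := by
      rintro z ⟨s, rfl⟩
      rw [← hBinv s]
      exact mem_image_of_mem _ hyB
    have : A ⊆ B := by
      rw [← (h y hyA).2]
      exact closure_minimal horbB hBclosed
    exact le_antisymm hBA this
end

section
/- A recurrent function g : ℝ → X (i.e., a recurrent point for the Bebutov shift flow on C(ℝ,X)) is uniformly continuous on ℝ and its range g(ℝ) has compact closure in X. -/
open Set

/-- The Bebutov shift: (shiftc τ f)(t) = f(t + τ). -/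
noncomputable def shiftc {Y : Type*} [TopologicalSpace Y] (τ : ℝ) (f : C(ℝ, Y)) : C(ℝ, Y) :=
  f.comp ⟨fun t => t + τ, by continuity⟩

/-- A continuous function is (Birkhoff) recurrent if it is a recurrent point of the
Bebutov shift flow on C(ℝ,Y) with the compact-open topology: every neighborhood of f
is visited by the shifted function in every interval of some fixed length, and the
hull of f is compact. -/
def IsRecurrentFn {Y : Type*} [TopologicalSpace Y] (f : C(ℝ, Y)) : Prop :=
  (∀ U ∈ nhds f, ∃ l > (0:ℝ), ∀ a : ℝ, ∃ τ ∈ Icc a (a + l), shiftc τ f ∈ U) ∧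
    IsCompact (closure (range fun τ : ℝ => shiftc τ f))

/-!
A compact set of continuous maps on a locally compact space is equicontinuous (tube lemma
applied to `(x, f) ↦ (f x₀, f x)`). Applied to the hull of `g`, this makes the translates
`s ↦ g (s + τ)` equicontinuous at `0`, which is exactly uniform continuity of `g`. Evaluating
the hull at `0` gives a compact set containing the range of `g`.
-/

open Filter Topology

@[simp]
theorem shiftc_apply {Y : Type*} [TopologicalSpace Y] (τ : ℝ) (f : C(ℝ, Y)) (t : ℝ) :
    shiftc τ f t = f (t + τ) :=
  rfl

theorem IsCompact.equicontinuousAt_of_range_subset {ι X α : Type*} [TopologicalSpace X]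
    [LocallyCompactSpace X] [UniformSpace α] {K : Set C(X, α)} (hK : IsCompact K)
    {F : ι → C(X, α)} (hF : range F ⊆ K) (x₀ : X) :
    EquicontinuousAt (fun i => ⇑(F i)) x₀ := by
  intro U hU
  have hnear : ∀ f ∈ K, ∀ᶠ z : X × C(X, α) in 𝓝 (x₀, f), (z.2 x₀, z.2 z.1) ∈ U := by
    intro f _
    have hφ : Continuous fun z : X × C(X, α) => (z.2 x₀, z.2 z.1) := by fun_prop
    exact hφ.continuousAt.eventually (nhds_le_uniformity (f x₀) hU)
  filter_upwards [hK.eventually_forall_of_forall_eventually (P := fun x f => (f x₀, f x) ∈ U)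
    hnear] with x hx i
  exact hx (F i) (hF (mem_range_self i))

theorem uniformContinuous_of_equicontinuousAt_zero_comp_add_right {G α : Type*}
    [UniformSpace G] [AddGroup G] [IsUniformAddGroup G] [UniformSpace α] {g : G → α}
    (hg : EquicontinuousAt (fun τ s => g (s + τ)) 0) : UniformContinuous g := by
  intro U hU
  rw [uniformity_eq_comap_nhds_zero G]
  refine ⟨_, hg U hU, fun p hp => ?_⟩
  simpa using hp p.1

theorem uniformContinuous_of_isCompact_closure_range_shiftc {X : Type*} [UniformSpace X]
    {f : C(ℝ, X)} (hf : IsCompact (closure (range fun τ : ℝ => shiftc τ f))) :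
    UniformContinuous f :=
  uniformContinuous_of_equicontinuousAt_zero_comp_add_right
    (hf.equicontinuousAt_of_range_subset subset_closure 0)

theorem isCompact_closure_range_of_isCompact_closure_range_shiftc {X : Type*}
    [TopologicalSpace X] [T2Space X] {f : C(ℝ, X)}
    (hf : IsCompact (closure (range fun τ : ℝ => shiftc τ f))) :
    IsCompact (closure (range f)) := by
  refine (hf.image (continuous_eval_const 0)).closure_of_subset ?_
  rintro _ ⟨τ, rfl⟩
  exact ⟨shiftc τ f, subset_closure (mem_range_self τ), by simp⟩

theorem stmt5_general {X : Type*} [MetricSpace X]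
    (g : C(ℝ, X)) (hg : IsRecurrentFn g) :
    UniformContinuous (⇑g) ∧ IsCompact (closure (range (⇑g))) :=
  ⟨uniformContinuous_of_isCompact_closure_range_shiftc hg.2,
    isCompact_closure_range_of_isCompact_closure_range_shiftc hg.2⟩

/-- A recurrent function g : ℝ → X is uniformly continuous and
its range has compact closure in X. -/
theorem stmt5 {X : Type*} [MetricSpace X] [CompleteSpace X]
    (g : C(ℝ, X)) (hg : IsRecurrentFn g) :
    UniformContinuous (⇑g) ∧ IsCompact (closure (range (⇑g))) :=
  stmt5_general g hg
end

section
/- Let Φ be a gradient semiflow with finitely many equilibria and γ a full solution with compact orbit closure. Then ω(γ) = {e} and α(γ) = {e'} for some equilibria e, e'. -/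
open Set Filter Topology

/-- ω-limit set of a curve. -/
def omegaLimitSol {X : Type*} [TopologicalSpace X] (γ : ℝ → X) : Set X :=
  {y | ∃ u : ℕ → ℝ, Tendsto u atTop atTop ∧ Tendsto (fun n => γ (u n)) atTop (nhds y)}

/-- α-limit set of a curve. -/
def alphaLimitSol {X : Type*} [TopologicalSpace X] (γ : ℝ → X) : Set X :=
  {y | ∃ u : ℕ → ℝ, Tendsto u atTop atBot ∧ Tendsto (fun n => γ (u n)) atTop (nhds y)}

/-!
Along a solution the Lyapunov function `V` is monotone and bounded, so it converges as
`t → ±∞`; hence `V` is constant on each limit set. Limit sets are invariant, so every limit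
point lies on an orbit of constant `V` and is an equilibrium. A limit set is therefore finite,
and a finite limit set of a continuous curve with compact orbit closure is a single point:
otherwise the curve would eventually have to jump between disjoint neighbourhoods of the
points of the limit set.
-/

section LimitSets

variable {X : Type*}

theorem alphaLimitSol_eq_omegaLimitSol_comp_neg [TopologicalSpace X] (γ : ℝ → X) :
    alphaLimitSol γ = omegaLimitSol (γ ∘ Neg.neg) := by
  ext y
  constructor
  · rintro ⟨u, hu, hy⟩
    exact ⟨-u, tendsto_neg_atBot_atTop.comp hu, by simpa [Function.comp_def] using hy⟩
  · rintro ⟨u, hu, hy⟩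
    exact ⟨-u, tendsto_neg_atTop_atBot.comp hu, hy⟩

theorem mapsTo_omegaLimitSol [TopologicalSpace X] {γ : ℝ → X} {f : X → X}
    (hf : Continuous f) {τ : ℝ} (hτ : ∀ r, γ (r + τ) = f (γ r)) :
    MapsTo f (omegaLimitSol γ) (omegaLimitSol γ) := by
  rintro z ⟨u, hu, hz⟩
  exact ⟨(· + τ) ∘ u, tendsto_atTop_add_const_right _ τ hu,
    by simpa only [Function.comp_def, hτ] using (hf.tendsto z).comp hz⟩

theorem apply_eq_of_mem_omegaLimitSol [TopologicalSpace X] {Y : Type*} [TopologicalSpace Y]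
    [T2Space Y] {γ : ℝ → X} {V : X → Y} (hV : Continuous V) {c : Y}
    (hc : Tendsto (V ∘ γ) atTop (𝓝 c)) {z : X} (hz : z ∈ omegaLimitSol γ) : V z = c := by
  obtain ⟨u, hu, hconv⟩ := hz
  exact tendsto_nhds_unique ((hV.tendsto z).comp hconv) (hc.comp hu)

variable [MetricSpace X] {γ : ℝ → X}

theorem omegaLimitSol_nonempty (hγ : IsCompact (closure (range γ))) :
    (omegaLimitSol γ).Nonempty := by
  obtain ⟨z, -, φ, hφ, hz⟩ :=
    hγ.tendsto_subseq fun n : ℕ => subset_closure (mem_range_self (n : ℝ))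
  exact ⟨z, fun n => (φ n : ℝ), tendsto_natCast_atTop_atTop.comp hφ.tendsto_atTop, hz⟩

theorem eventually_exists_mem_omegaLimitSol_dist_lt (hγ : IsCompact (closure (range γ)))
    {ε : ℝ} (hε : 0 < ε) : ∀ᶠ t in atTop, ∃ x ∈ omegaLimitSol γ, dist (γ t) x < ε := by
  by_contra h
  obtain ⟨u, hu, hfar⟩ := exists_seq_forall_of_frequently (not_eventually.1 h)
  obtain ⟨z, -, φ, hφ, hz⟩ :=
    hγ.tendsto_subseq fun n => subset_closure (mem_range_self (u n))
  have hzω : z ∈ omegaLimitSol γ := ⟨u ∘ φ, hu.comp hφ.tendsto_atTop, hz⟩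
  obtain ⟨n, hn⟩ := (Metric.tendsto_nhds.1 hz ε hε).exists
  exact hfar (φ n) ⟨z, hzω, hn⟩

theorem frequently_dist_lt_of_mem_omegaLimitSol {y : X} (hy : y ∈ omegaLimitSol γ)
    {ε : ℝ} (hε : 0 < ε) : ∃ᶠ t in atTop, dist (γ t) y < ε := by
  obtain ⟨u, hu, hconv⟩ := hy
  exact hu.frequently (Metric.tendsto_nhds.1 hconv ε hε).frequently

theorem omegaLimitSol_subsingleton_of_finite (hγc : Continuous γ)
    (hγ : IsCompact (closure (range γ))) (hfin : (omegaLimitSol γ).Finite) :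
    (omegaLimitSol γ).Subsingleton := by
  intro a ha b hb
  by_contra hab
  set ω := omegaLimitSol γ
  obtain ⟨r, hr, hball⟩ : ∃ r > 0, Metric.ball a r ⊆ (ω \ {a})ᶜ :=
    Metric.isOpen_iff.1 (hfin.sdiff.isClosed.isOpen_compl) a fun h => h.2 rfl
  have hsep : ∀ x ∈ ω \ {a}, r ≤ dist x a := fun x hx =>
    not_lt.1 fun h => hball (Metric.mem_ball.2 h) hx
  set U := γ ⁻¹' Metric.ball a (r / 2)
  set W := γ ⁻¹' ⋃ x ∈ ω \ {a}, Metric.ball x (r / 2)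
  have hUopen : IsOpen U := Metric.isOpen_ball.preimage hγc
  have hWopen : IsOpen W := (isOpen_biUnion fun _ _ => Metric.isOpen_ball).preimage hγc
  obtain ⟨T, hT⟩ :=
    (eventually_exists_mem_omegaLimitSol_dist_lt hγ (half_pos hr)).exists_forall_of_atTop
  have hcover : Ici T ⊆ U ∪ W := by
    intro t ht
    obtain ⟨x, hx, hdx⟩ := hT t ht
    by_cases hxa : x = a
    · subst hxa
      exact Or.inl hdx
    · exact Or.inr (mem_biUnion ⟨hx, hxa⟩ hdx)
  have hUne : (Ici T ∩ U).Nonempty :=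
    ((frequently_dist_lt_of_mem_omegaLimitSol ha (half_pos hr)).and_eventually
      (eventually_ge_atTop T)).exists.imp fun _ h => ⟨h.2, h.1⟩
  have hWne : (Ici T ∩ W).Nonempty :=
    ((frequently_dist_lt_of_mem_omegaLimitSol hb (half_pos hr)).and_eventually
      (eventually_ge_atTop T)).exists.imp fun _ h =>
        ⟨h.2, mem_biUnion ⟨hb, Ne.symm hab⟩ h.1⟩
  obtain ⟨t, -, htU, htW⟩ := isPreconnected_Ici U W hUopen hWopen hcover hUne hWne
  obtain ⟨x, hx, htx⟩ := mem_iUnion₂.1 htW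
  have hta : dist (γ t) a < r / 2 := htU
  have htx : dist (γ t) x < r / 2 := htx
  linarith [hsep x hx, dist_triangle_left x a (γ t)]

end LimitSets

section GradientSemiflow

variable {X : Type*} {Φ : ℝ → X → X}

theorem continuous_of_isSolution [TopologicalSpace X]
    (hcont : ContinuousOn (fun p : ℝ × X => Φ p.1 p.2) (Ici 0 ×ˢ univ)) {γ : ℝ → X}
    (hsol : ∀ s t : ℝ, s ≤ t → γ t = Φ (t - s) (γ s)) : Continuous γ := by
  refine continuous_iff_continuousAt.2 fun t₀ => ?_
  have hnhds : Ici (t₀ - 1) ∈ 𝓝 t₀ := Ici_mem_nhds (by linarith)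
  have hflow : ContinuousOn (fun t => Φ (t - (t₀ - 1)) (γ (t₀ - 1))) (Ici (t₀ - 1)) :=
    hcont.comp ((continuous_sub_right _).prodMk continuous_const).continuousOn
      fun t ht => ⟨mem_Ici.2 (sub_nonneg.2 ht), mem_univ _⟩
  refine (hflow.continuousAt hnhds).congr ?_
  filter_upwards [hnhds] with t ht
  exact (hsol _ t ht).symm

theorem antitone_comp_of_isSolution {V : X → ℝ} (hzero : ∀ x, Φ 0 x = x)
    (hdec : ∀ x, ∀ s t : ℝ, 0 ≤ s → s ≤ t → V (Φ t x) ≤ V (Φ s x)) {γ : ℝ → X}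
    (hsol : ∀ s t : ℝ, s ≤ t → γ t = Φ (t - s) (γ s)) : Antitone (V ∘ γ) := by
  intro s t hst
  have h := hdec (γ s) 0 (t - s) le_rfl (sub_nonneg.2 hst)
  rwa [hzero, ← hsol s t hst] at h

variable [MetricSpace X] {V : X → ℝ} {γ : ℝ → X}

theorem omegaLimitSol_subset_equilibria (hΦ : ∀ t ≥ (0:ℝ), Continuous (Φ t))
    (hV : Continuous V)
    (hgrad : ∀ x, (∀ t ≥ (0:ℝ), V (Φ t x) = V x) → ∀ t ≥ (0:ℝ), Φ t x = x)
    (hshift : ∀ t ≥ (0:ℝ), ∃ τ : ℝ, ∀ r, γ (r + τ) = Φ t (γ r))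
    {c : ℝ} (hc : Tendsto (V ∘ γ) atTop (𝓝 c)) :
    omegaLimitSol γ ⊆ {x | ∀ t ≥ (0:ℝ), Φ t x = x} := by
  intro z hz
  refine hgrad z fun t ht => ?_
  obtain ⟨τ, hτ⟩ := hshift t ht
  rw [apply_eq_of_mem_omegaLimitSol hV hc (mapsTo_omegaLimitSol (hΦ t ht) hτ hz),
    apply_eq_of_mem_omegaLimitSol hV hc hz]

theorem exists_equilibrium_omegaLimitSol_eq_singleton (hΦ : ∀ t ≥ (0:ℝ), Continuous (Φ t))
    (hV : Continuous V)
    (hgrad : ∀ x, (∀ t ≥ (0:ℝ), V (Φ t x) = V x) → ∀ t ≥ (0:ℝ), Φ t x = x)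
    (hfin : {x : X | ∀ t ≥ (0:ℝ), Φ t x = x}.Finite)
    (hγc : Continuous γ) (hγ : IsCompact (closure (range γ)))
    (hshift : ∀ t ≥ (0:ℝ), ∃ τ : ℝ, ∀ r, γ (r + τ) = Φ t (γ r))
    {c : ℝ} (hc : Tendsto (V ∘ γ) atTop (𝓝 c)) :
    ∃ e, (∀ t ≥ (0:ℝ), Φ t e = e) ∧ omegaLimitSol γ = {e} := by
  obtain ⟨e, he⟩ := omegaLimitSol_nonempty hγ
  have hsub := omegaLimitSol_subset_equilibria hΦ hV hgrad hshift hc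
  exact ⟨e, hsub he,
    (omegaLimitSol_subsingleton_of_finite hγc hγ (hfin.subset hsub)).eq_singleton_of_mem he⟩

end GradientSemiflow

theorem stmt8_general {X : Type*} [MetricSpace X]
    (Φ : ℝ → X → X)
    (hcont : ContinuousOn (fun p : ℝ × X => Φ p.1 p.2) (Ici 0 ×ˢ univ))
    (hzero : ∀ x, Φ 0 x = x)
    (V : X → ℝ) (hV : Continuous V)
    (hdec : ∀ x, ∀ s t : ℝ, 0 ≤ s → s ≤ t → V (Φ t x) ≤ V (Φ s x))
    (hgrad : ∀ x, (∀ t ≥ (0:ℝ), V (Φ t x) = V x) → ∀ t ≥ (0:ℝ), Φ t x = x)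
    (hfin : {x : X | ∀ t ≥ (0:ℝ), Φ t x = x}.Finite)
    (γ : ℝ → X)
    (hsol : ∀ s t : ℝ, s ≤ t → γ t = Φ (t - s) (γ s))
    (hpre : IsCompact (closure (range γ))) :
    ∃ e e' : X, (∀ t ≥ (0:ℝ), Φ t e = e) ∧ (∀ t ≥ (0:ℝ), Φ t e' = e') ∧
      omegaLimitSol γ = {e} ∧ alphaLimitSol γ = {e'} := by
  have hΦ : ∀ t ≥ (0:ℝ), Continuous (Φ t) := fun t ht =>
    hcont.comp_continuous (continuous_const.prodMk continuous_id) fun x => ⟨ht, mem_univ x⟩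
  have hγc := continuous_of_isSolution hcont hsol
  have hanti := antitone_comp_of_isSolution hzero hdec hsol
  have hVbdd : IsCompact (V '' closure (range γ)) := hpre.image hV
  have hrange : range (V ∘ γ) ⊆ V '' closure (range γ) := by
    rw [range_comp]; exact image_mono subset_closure
  obtain ⟨e, he, hω⟩ := exists_equilibrium_omegaLimitSol_eq_singleton hΦ hV hgrad hfin hγc
    hpre (fun t _ => ⟨t, fun r => by simpa using hsol r (r + t) (by linarith)⟩)
    (tendsto_atTop_ciInf hanti (hVbdd.bddBelow.mono hrange))
  obtain ⟨e', he', hα⟩ := exists_equilibrium_omegaLimitSol_eq_singleton hΦ hV hgrad hfin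
    (hγc.comp continuous_neg) (by rwa [neg_surjective.range_comp])
    (fun t _ => ⟨-t, fun r => by simpa [sub_eq_add_neg] using hsol (-r) (t - r) (by linarith)⟩)
    ((tendsto_atBot_ciSup hanti (hVbdd.bddAbove.mono hrange)).comp tendsto_neg_atTop_atBot)
  exact ⟨e, e', he, he', hω, alphaLimitSol_eq_omegaLimitSol_comp_neg γ ▸ hα⟩

/-- For a gradient semiflow with finitely many equilibria, every full
solution with compact orbit closure has ω(γ) = {e} and α(γ) = {e'} for equilibria e, e'. -/
theorem stmt8 {X : Type*} [MetricSpace X]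
    (Φ : ℝ → X → X)
    (hcont : ContinuousOn (fun p : ℝ × X => Φ p.1 p.2) (Ici 0 ×ˢ univ))
    (hzero : ∀ x, Φ 0 x = x)
    (hadd : ∀ t s : ℝ, 0 ≤ t → 0 ≤ s → ∀ x, Φ (t + s) x = Φ t (Φ s x))
    (V : X → ℝ) (hV : Continuous V)
    (hdec : ∀ x, ∀ s t : ℝ, 0 ≤ s → s ≤ t → V (Φ t x) ≤ V (Φ s x))
    (hgrad : ∀ x, (∀ t ≥ (0:ℝ), V (Φ t x) = V x) → ∀ t ≥ (0:ℝ), Φ t x = x)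
    (hfin : {x : X | ∀ t ≥ (0:ℝ), Φ t x = x}.Finite)
    (γ : ℝ → X)
    (hsol : ∀ s t : ℝ, s ≤ t → γ t = Φ (t - s) (γ s))
    (hpre : IsCompact (closure (range γ))) :
    ∃ e e' : X, (∀ t ≥ (0:ℝ), Φ t e = e) ∧ (∀ t ≥ (0:ℝ), Φ t e' = e') ∧
      omegaLimitSol γ = {e} ∧ alphaLimitSol γ = {e'} :=
  stmt8_general Φ hcont hzero V hV hdec hgrad hfin γ hsol hpre
end

section
/- Let Φ be a semiflow on a compact metric space A such that Φ is gradient with Lyapunov function V, and suppose the set of equilibria is E = {0} ∪ E₀ with 0 ∉ cl(E₀), V(0) = 0, and V(e) < 0 for all e ∈ E₀. Let K₀ be the maximal invariant set in A \ U for some open neighborhood U of 0 with V > max_{e∈E₀} V(e) on U. Then {K₀, {0}} is a Morse decomposition of A: every full solution γ in A either has range in K₀ or in {0}, or satisfies α(γ) = {0} and ω(γ) ⊆ K₀. -/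
open Set Filter

open Topology

/-- For a gradient semiflow on a compact metric space whose equilibria
are x₀ together with a set E₀ (with x₀ ∉ cl E₀, V(x₀) = 0 and V < 0 on E₀), letting K₀
be the maximal invariant set outside an open neighborhood U of x₀ on which V exceeds
all values of V on E₀, the pair {K₀, {x₀}} is a Morse decomposition: every full
solution either stays in K₀, or is the equilibrium x₀, or connects x₀ to K₀. -/
theorem stmt17 {X : Type*} [MetricSpace X] [CompactSpace X]
    (Φ : ℝ → X → X)
    (hcont : ContinuousOn (fun p : ℝ × X => Φ p.1 p.2) (Ici 0 ×ˢ univ))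
    (hzero : ∀ x, Φ 0 x = x)
    (hadd : ∀ t s : ℝ, 0 ≤ t → 0 ≤ s → ∀ x, Φ (t + s) x = Φ t (Φ s x))
    (V : X → ℝ) (hV : Continuous V)
    (hdec : ∀ x, ∀ s t : ℝ, 0 ≤ s → s ≤ t → V (Φ t x) ≤ V (Φ s x))
    (hgrad : ∀ x, (∀ t ≥ (0:ℝ), V (Φ t x) = V x) → ∀ t ≥ (0:ℝ), Φ t x = x)
    (x₀ : X) (E₀ : Set X)
    (hE : {x : X | ∀ t ≥ (0:ℝ), Φ t x = x} = insert x₀ E₀)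
    (hx₀ : x₀ ∉ closure E₀) (hV₀ : V x₀ = 0) (hVneg : ∀ e ∈ E₀, V e < 0)
    (U : Set X) (hUopen : IsOpen U) (hx₀U : x₀ ∈ U)
    (hVU : ∀ u ∈ U, ∀ e ∈ E₀, V e < V u)
    (K₀ : Set X) (hK₀U : K₀ ⊆ Uᶜ)
    (hK₀inv : ∀ t ≥ (0:ℝ), Φ t '' K₀ = K₀)
    (hK₀max : ∀ S : Set X, S ⊆ Uᶜ → (∀ t ≥ (0:ℝ), Φ t '' S = S) → S ⊆ K₀) :
    ∀ γ : ℝ → X, (∀ s t : ℝ, s ≤ t → γ t = Φ (t - s) (γ s)) →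
      range γ ⊆ K₀ ∨ (∀ t, γ t = x₀) ∨
      (alphaLimitSol γ = {x₀} ∧ omegaLimitSol γ ⊆ K₀) := by
  intro γ hγ
  -- V along γ is antitone
  have hmono : Antitone fun t => V (γ t) := by
    intro s t hst
    show V (γ t) ≤ V (γ s)
    rw [hγ s t hst]
    calc V (Φ (t - s) (γ s)) ≤ V (Φ 0 (γ s)) := hdec (γ s) 0 (t - s) le_rfl (by linarith)
      _ = V (γ s) := by rw [hzero]
  have hsub : range (fun t => V (γ t)) ⊆ range V := by
    rintro _ ⟨t, rfl⟩; exact ⟨γ t, rfl⟩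
  have hbdB : BddBelow (range fun t => V (γ t)) :=
    ((isCompact_range hV).bddBelow).mono hsub
  have hbdA : BddAbove (range fun t => V (γ t)) :=
    ((isCompact_range hV).bddAbove).mono hsub
  set L : ℝ := ⨅ t, V (γ t) with hLdef
  set M : ℝ := ⨆ t, V (γ t) with hMdef
  have hLlim : Tendsto (fun t => V (γ t)) atTop (𝓝 L) := tendsto_atTop_ciInf hmono hbdB
  have hMlim : Tendsto (fun t => V (γ t)) atBot (𝓝 M) := tendsto_atBot_ciSup hmono hbdA
  -- key: limit points along a filter on which V∘γ converges are equilibria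
  have key : ∀ (c : ℝ) (l : Filter ℝ), Tendsto (fun t => V (γ t)) l (𝓝 c) →
      (∀ t : ℝ, 0 ≤ t → Tendsto (fun s : ℝ => s + t) l l) →
      ∀ y : X, ∀ u : ℕ → ℝ, Tendsto u atTop l → Tendsto (fun n => γ (u n)) atTop (𝓝 y) →
      V y = c ∧ (∀ t ≥ (0:ℝ), Φ t y = y) := by
    intro c l hVl hshift y u hu hγu
    have hVy : V y = c := tendsto_nhds_unique ((hV.tendsto y).comp hγu) (hVl.comp hu)
    have hconst : ∀ t ≥ (0:ℝ), V (Φ t y) = V y := by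
      intro t ht
      have hpair : Tendsto (fun n => ((t, γ (u n)) : ℝ × X)) atTop
          (𝓝[Ici (0:ℝ) ×ˢ (univ : Set X)] (t, y)) := by
        rw [tendsto_nhdsWithin_iff]
        exact ⟨tendsto_const_nhds.prodMk_nhds hγu,
          Eventually.of_forall fun n => ⟨ht, mem_univ _⟩⟩
      have hΦ : Tendsto (fun n => Φ t (γ (u n))) atTop (𝓝 (Φ t y)) :=
        ((hcont (t, y) ⟨ht, mem_univ _⟩).tendsto).comp hpair
      have heqn : ∀ n, Φ t (γ (u n)) = γ (u n + t) := by
        intro n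
        rw [hγ (u n) (u n + t) (by linarith)]
        congr 1; ring
      simp only [heqn] at hΦ
      have h2 : Tendsto (fun n => V (γ (u n + t))) atTop (𝓝 (V (Φ t y))) :=
        (hV.tendsto _).comp hΦ
      have h3 : Tendsto (fun n => V (γ (u n + t))) atTop (𝓝 c) :=
        hVl.comp ((hshift t ht).comp hu)
      rw [tendsto_nhds_unique h2 h3, hVy]
    exact ⟨hVy, fun t ht => hgrad y hconst t ht⟩
  have homega : ∀ y ∈ omegaLimitSol γ, V y = L ∧ (∀ t ≥ (0:ℝ), Φ t y = y) := by
    rintro y ⟨u, hu1, hu2⟩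
    exact key L atTop hLlim (fun t ht => tendsto_atTop_add_const_right _ t tendsto_id) y u hu1 hu2
  have halpha : ∀ y ∈ alphaLimitSol γ, V y = M ∧ (∀ t ≥ (0:ℝ), Φ t y = y) := by
    rintro y ⟨u, hu1, hu2⟩
    exact key M atBot hMlim (fun t ht => tendsto_atBot_add_const_right _ t tendsto_id) y u hu1 hu2
  by_cases hU : ∃ t₁, γ t₁ ∈ U
  · obtain ⟨t₁, ht₁⟩ := hU
    -- α-limit set is nonempty
    have hαne : ∃ a, a ∈ alphaLimitSol γ := by
      obtain ⟨a, -, φ, hφ, hlim⟩ :=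
        isCompact_univ.tendsto_subseq (x := fun n => γ (-(n : ℝ))) fun n => mem_univ _
      refine ⟨a, ⟨fun n => -(φ n : ℝ), ?_, hlim⟩⟩
      exact tendsto_neg_atBot_iff.mpr (tendsto_natCast_atTop_atTop.comp hφ.tendsto_atTop)
    obtain ⟨a, ha⟩ := hαne
    -- α ⊆ {x₀}
    have hαx₀ : alphaLimitSol γ ⊆ {x₀} := by
      intro y hy
      obtain ⟨hVyM, heqy⟩ := halpha y hy
      have hyE : y ∈ insert x₀ E₀ := by
        have : y ∈ {x : X | ∀ t ≥ (0:ℝ), Φ t x = x} := heqy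
        rwa [hE] at this
      rcases hyE with rfl | hyE₀
      · rfl
      · exfalso
        have h1 : V y < V (γ t₁) := hVU (γ t₁) ht₁ y hyE₀
        have h2 : V (γ t₁) ≤ M := le_ciSup hbdA t₁
        rw [hVyM] at h1; linarith
    have hx₀α : x₀ ∈ alphaLimitSol γ := hαx₀ ha ▸ ha
    have hαeq : alphaLimitSol γ = {x₀} := Subset.antisymm hαx₀ (singleton_subset_iff.2 hx₀α)
    have hM0 : M = 0 := by
      have := (halpha x₀ hx₀α).1
      rw [hV₀] at this; exact this.symm
    by_cases hL0 : L = 0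
    · -- constant solution equal to x₀
      have hVγ : ∀ t, V (γ t) = 0 := by
        intro t
        have h1 : L ≤ V (γ t) := ciInf_le hbdB t
        have h2 : V (γ t) ≤ M := le_ciSup hbdA t
        rw [hL0] at h1; rw [hM0] at h2; linarith
      have hfix : ∀ s, ∀ t ≥ (0:ℝ), Φ t (γ s) = γ s := by
        intro s
        apply hgrad
        intro t ht
        have h : Φ t (γ s) = γ (s + t) := by
          rw [hγ s (s + t) (by linarith)]; congr 1; ring
        rw [h, hVγ, hVγ]
      have hconstγ : ∀ t, γ t = γ t₁ := by
        intro t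
        rcases le_total t t₁ with h | h
        · have h2 := hγ t t₁ h
          rw [hfix t (t₁ - t) (by linarith)] at h2
          exact h2.symm
        · rw [hγ t₁ t h, hfix t₁ (t - t₁) (by linarith)]
      have ht₁x₀ : γ t₁ = x₀ := by
        have hyE : γ t₁ ∈ insert x₀ E₀ := by
          have : γ t₁ ∈ {x : X | ∀ t ≥ (0:ℝ), Φ t x = x} := hfix t₁
          rwa [hE] at this
        rcases hyE with h | h
        · exact h
        · exact absurd (hVU (γ t₁) ht₁ (γ t₁) h) (lt_irrefl _)
      exact Or.inr (Or.inl fun t => (hconstγ t).trans ht₁x₀)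
    · -- L < 0, ω ⊆ K₀
      have hLM : L ≤ M := le_trans (ciInf_le hbdB 0) (le_ciSup hbdA 0)
      have hLneg : L < 0 := lt_of_le_of_ne (hM0 ▸ hLM) hL0
      refine Or.inr (Or.inr ⟨hαeq, hK₀max (omegaLimitSol γ) ?_ ?_⟩)
      · intro y hy
        obtain ⟨hVyL, heqy⟩ := homega y hy
        have hyE : y ∈ insert x₀ E₀ := by
          have : y ∈ {x : X | ∀ t ≥ (0:ℝ), Φ t x = x} := heqy
          rwa [hE] at this
        rcases hyE with rfl | hyE₀
        · rw [hV₀] at hVyL; exact absurd hVyL.symm (ne_of_lt hLneg)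
        · intro hyU
          exact absurd (hVU y hyU y hyE₀) (lt_irrefl _)
      · intro t ht
        apply Subset.antisymm
        · rintro _ ⟨y, hy, rfl⟩
          rw [(homega y hy).2 t ht]; exact hy
        · intro y hy
          exact ⟨y, hy, (homega y hy).2 t ht⟩
  · -- γ never enters U : range γ ⊆ K₀
    push_neg at hU
    left
    apply hK₀max (range γ)
    · rintro _ ⟨t, rfl⟩; exact hU t
    · intro t ht
      apply Subset.antisymm
      · rintro _ ⟨_, ⟨s, rfl⟩, rfl⟩
        refine ⟨s + t, ?_⟩
        rw [hγ s (s + t) (by linarith)]; congr 1; ring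
      · rintro _ ⟨s, rfl⟩
        refine ⟨γ (s - t), ⟨s - t, rfl⟩, ?_⟩
        rw [hγ (s - t) s (by linarith)]; congr 1; ring
end
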